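/- Let ℓ: ℝ × ℝ → ℝ be a loss function such that ℓ(y,·) is convex for every y, and fix s ∈ {0,1}^p. Then strong duality holds for the inner regularized problem restricted to the support encoded by s: inf over w ∈ ℝ^p with w_j = 0 whenever s_j = 0 of Σ_{i=1}^n ℓ(y_i, x_iᵀw) + (1/(2γ))‖w‖₂² equals sup_{α ∈ ℝ^n} f(α,s) = sup_{α ∈ ℝ^n} [−Σ_{i=1}^n ℓ̂(y_i, α_i) − (γ/2) Σ_{j=1}^p s_j (X_jᵀα)²] (equality of values in the extended reals). -/

import Mathlib

/-!
Strong duality through the value function of the perturbed primal problem,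
`V u = inf_{w supported on s} ∑ ℓ(y_i, (X w)_i + u_i) + ‖w‖² / (2γ)`.
`V` is convex, as the partial infimum of a jointly convex function, and finite, since affine
minorants of the losses together with the quadratic regulariser bound the objective from below.
Separating the strict epigraph of `V` from `(0, V 0)` gives a subgradient `α` of `V` at `0`.
Evaluating the subgradient inequality at `u = t - X w⋆`, where `w⋆ = -γ (s ⊙ Xᵀα)` minimises
`⟨w, Xᵀα⟩ + ‖w‖² / (2γ)` over the support, bounds `∑ ℓ̂(y_i, α_i)` by
`-V 0 - (γ/2) ∑ s_j (X_jᵀα)²`, that is `V 0 ≤ f(α, s)`; the reverse inequality is weak duality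
(Fenchel–Young).
-/

open Set Matrix

theorem ConvexOn.exists_subgradient {E : Type*} [NormedAddCommGroup E] [NormedSpace ℝ E]
    {f : E → ℝ} (hf : ConvexOn ℝ univ f) (hfc : Continuous f) (x₀ : E) :
    ∃ g : StrongDual ℝ E, ∀ x, f x₀ + g (x - x₀) ≤ f x := by
  set S := {q : E × ℝ | q.1 ∈ univ ∧ f q.1 < q.2}
  have hopen : IsOpen S := by
    simpa [S] using isOpen_lt (hfc.comp continuous_fst) continuous_snd
  obtain ⟨φ, hφ⟩ := geometric_hahn_banach_open_point hf.convex_strict_epigraph hopen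
    (fun h => lt_irrefl _ h.2 : (x₀, f x₀) ∉ S)
  set c := φ (0, 1)
  have hsplit : ∀ x t, φ (x, t) = φ (x, 0) + t * c := fun x t => by
    rw [show (x, t) = (x, 0) + t • ((0 : E), (1 : ℝ)) by simp, map_add, map_smul, smul_eq_mul]
  have hc : c < 0 := by
    have := hφ (x₀, f x₀ + 1) ⟨mem_univ _, by linarith⟩
    rw [hsplit, hsplit x₀ (f x₀)] at this
    linarith
  -- Letting `t ↓ f x` in the separation inequality at `(x, t)`.
  have key : ∀ x, φ (x, 0) + f x * c ≤ φ (x₀, 0) + f x₀ * c := fun x => by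
    have h := le_of_forall_gt_imp_ge_of_dense fun t (ht : f x < t) => by
      have := hφ (x, t) ⟨mem_univ _, ht⟩
      rw [hsplit, hsplit x₀ (f x₀)] at this
      exact ((div_lt_iff_of_neg hc).2
        (by linarith : t * c < φ (x₀, 0) + f x₀ * c - φ (x, 0))).le
    rw [div_le_iff_of_neg hc] at h
    linarith
  refine ⟨(-c)⁻¹ • φ.comp (ContinuousLinearMap.inl ℝ E ℝ), fun x => ?_⟩
  have : (φ (x, 0) - φ (x₀, 0)) / -c ≤ f x - f x₀ :=
    (div_le_iff₀ (neg_pos.2 hc)).2 (by linarith [key x])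
  simp only [FunLike.coe_smul, ContinuousLinearMap.coe_comp, Pi.smul_apply,
    Function.comp_apply, ContinuousLinearMap.inl_apply, map_sub, smul_eq_mul]
  rw [← mul_sub, inv_mul_eq_div]
  linarith

theorem ConvexOn.exists_sum_mul_le {ι : Type*} [Fintype ι] {f : (ι → ℝ) → ℝ}
    (hf : ConvexOn ℝ univ f) (x₀ : ι → ℝ) :
    ∃ α : ι → ℝ, ∀ x, f x₀ + ∑ i, (x i - x₀ i) * α i ≤ f x := by
  classical
  obtain ⟨g, hg⟩ :=
    hf.exists_subgradient (continuousOn_univ.1 (hf.continuousOn isOpen_univ)) x₀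
  refine ⟨fun i => g fun j => if i = j then 1 else 0, fun x => ?_⟩
  have h := hg x
  rw [show g (x - x₀) = _ from g.toLinearMap.pi_apply_eq_sum_univ (x - x₀)] at h
  simpa [mul_comm] using h

theorem ConvexOn.sum {𝕜 E β ι : Type*} [Semiring 𝕜] [PartialOrder 𝕜] [AddCommMonoid E]
    [AddCommMonoid β] [PartialOrder β] [IsOrderedAddMonoid β] [SMul 𝕜 E] [Module 𝕜 β]
    {s : Set E} (hs : Convex 𝕜 s) (t : Finset ι) {f : ι → E → β}
    (hf : ∀ i ∈ t, ConvexOn 𝕜 s (f i)) : ConvexOn 𝕜 s fun x => ∑ i ∈ t, f i x := by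
  classical
  induction t using Finset.induction_on with
  | empty =>
    simp only [Finset.sum_empty]
    exact convexOn_const (0 : β) hs
  | insert a t ha ih =>
    simp only [Finset.sum_insert ha]
    exact (hf a (Finset.mem_insert_self a t)).add
      (ih fun i hi => hf i (Finset.mem_insert_of_mem hi))

theorem ConvexOn.ciInf_snd {E W : Type*} [AddCommGroup E] [Module ℝ E] [AddCommGroup W]
    [Module ℝ W] {F : E × W → ℝ} (hF : ConvexOn ℝ univ F)
    (hbdd : ∀ u, BddBelow (range fun w => F (u, w))) :
    ConvexOn ℝ univ fun u => ⨅ w, F (u, w) := by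
  refine ⟨convex_univ, fun u _ u' _ a b ha hb hab => ?_⟩
  simp only [smul_eq_mul, Real.mul_iInf_of_nonneg ha, Real.mul_iInf_of_nonneg hb]
  refine le_ciInf_add_ciInf fun w w' => ?_
  calc ⨅ w, F (a • u + b • u', w)
      ≤ F (a • u + b • u', a • w + b • w') := ciInf_le (hbdd _) _
    _ ≤ a * F (u, w) + b * F (u', w') :=
      hF.2 (mem_univ (u, w)) (mem_univ (u', w')) ha hb hab

theorem EReal.sum_iSup_le_iSup_sum {ι α : Type*} [Fintype ι] [Nonempty α]
    (φ : ι → α → EReal) : ∑ i, ⨆ u, φ i u ≤ ⨆ t : ι → α, ∑ i, φ i (t i) := by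
  classical
  suffices ∀ s : Finset ι, ∑ i ∈ s, ⨆ u, φ i u ≤ ⨆ t : ι → α, ∑ i ∈ s, φ i (t i) from
    this _
  intro s
  induction s using Finset.induction_on with
  | empty => simp
  | insert a s ha ih =>
    rw [Finset.sum_insert ha]
    refine EReal.add_le_of_forall_lt fun a' ha' b' hb' => ?_
    obtain ⟨u, hu⟩ := lt_iSup_iff.1 ha'
    obtain ⟨t, ht⟩ := lt_iSup_iff.1 (hb'.trans_le ih)
    refine le_iSup_of_le (Function.update t a u) ?_
    rw [Finset.sum_insert ha, Function.update_self, Finset.sum_congr rfl fun i hi =>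
      by rw [Function.update_of_ne (ne_of_mem_of_not_mem hi ha)]]
    exact add_le_add hu.le ht.le

@[norm_cast]
theorem EReal.coe_finsetSum {ι : Type*} (s : Finset ι) (g : ι → ℝ) :
    ((∑ i ∈ s, g i : ℝ) : EReal) = ∑ i ∈ s, (g i : EReal) :=
  map_sum (⟨⟨Real.toEReal, EReal.coe_zero⟩, EReal.coe_add⟩ : ℝ →+ EReal) g s

theorem Matrix.sum_mulVec_mul {m k : Type*} [Fintype m] [Fintype k] (X : Matrix m k ℝ)
    (w : k → ℝ) (α : m → ℝ) : ∑ i, (X *ᵥ w) i * α i = ∑ j, w j * (Xᵀ *ᵥ α) j := by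
  simpa [dotProduct, mulVec_transpose, mul_comm] using dotProduct_mulVec α X w

section InnerProblem

variable {n p : ℕ} (X : Matrix (Fin n) (Fin p) ℝ) (y : Fin n → ℝ) (γ : ℝ)
  (ℓ : ℝ → ℝ → ℝ) (s : Fin p → ℝ)

def supportSubmodule : Submodule ℝ (Fin p → ℝ) where
  carrier := {w | ∀ j, s j = 0 → w j = 0}
  add_mem' hw hw' j hj := by simp [hw j hj, hw' j hj]
  zero_mem' _ _ := rfl
  smul_mem' c _ hw j hj := by simp [hw j hj]

theorem isLeast_sum_mul_add_sum_sq (hγ : 0 < γ) (hs : ∀ j, s j = 0 ∨ s j = 1)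
    (v : Fin p → ℝ) :
    IsLeast (range fun w : supportSubmodule s =>
        ∑ j, (w : Fin p → ℝ) j * v j + 1 / (2 * γ) * ∑ j, (w : Fin p → ℝ) j ^ 2)
      (-(γ / 2) * ∑ j, s j * v j ^ 2) := by
  simp only [Finset.mul_sum, ← Finset.sum_add_distrib]
  constructor
  · refine ⟨⟨-γ • (s * v), fun j hj => by simp [hj]⟩, Finset.sum_congr rfl fun j _ => ?_⟩
    rcases hs j with h | h
    · simp [h]
    · simp only [Pi.smul_apply, Pi.mul_apply, h, one_mul, smul_eq_mul]
      field_simp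
      ring
  · rintro _ ⟨⟨w, hw⟩, rfl⟩
    refine Finset.sum_le_sum fun j _ => ?_
    rcases hs j with h | h
    · simp [h, hw j h]
    · have : 0 ≤ 1 / (2 * γ) * (w j + γ * v j) ^ 2 := by positivity
      have e : 1 / (2 * γ) * (w j + γ * v j) ^ 2
          = w j * v j + 1 / (2 * γ) * w j ^ 2 + γ / 2 * v j ^ 2 := by
        field_simp
        ring
      simp only [h, one_mul]
      linarith

noncomputable def perturbedPrimal (q : (Fin n → ℝ) × supportSubmodule s) : ℝ :=
  ∑ i, ℓ (y i) ((X *ᵥ q.2) i + q.1 i) + 1 / (2 * γ) * ∑ j, (q.2 : Fin p → ℝ) j ^ 2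

noncomputable def primalValue (u : Fin n → ℝ) : ℝ :=
  ⨅ w, perturbedPrimal X y γ ℓ s (u, w)

noncomputable def dualObjective (α : Fin n → ℝ) : EReal :=
  -(∑ i, ⨆ t : ℝ, ((t * α i - ℓ (y i) t : ℝ) : EReal))
    - ((γ / 2 * ∑ j, s j * (Xᵀ *ᵥ α) j ^ 2 : ℝ) : EReal)

theorem convexOn_perturbedPrimal (hγ : 0 ≤ γ) (hconv : ∀ z, ConvexOn ℝ univ (ℓ z)) :
    ConvexOn ℝ univ (perturbedPrimal X y γ ℓ s) := by
  let W := supportSubmodule s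
  have hloss := ConvexOn.sum convex_univ Finset.univ fun i _ =>
    (hconv (y i)).comp_linearMap (LinearMap.proj i ∘ₗ
      (X.mulVecLin ∘ₗ W.subtype ∘ₗ LinearMap.snd ℝ (Fin n → ℝ) W
        + LinearMap.fst ℝ (Fin n → ℝ) W))
  have hreg := (ConvexOn.sum convex_univ Finset.univ fun j _ =>
    (even_two.convexOn_pow (𝕜 := ℝ)).comp_linearMap
      (LinearMap.proj j ∘ₗ W.subtype ∘ₗ LinearMap.snd ℝ (Fin n → ℝ) W)).smul
    (by positivity : 0 ≤ 1 / (2 * γ))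
  exact hloss.add hreg

theorem bddBelow_perturbedPrimal (hγ : 0 < γ) (hconv : ∀ z, ConvexOn ℝ univ (ℓ z))
    (hs : ∀ j, s j = 0 ∨ s j = 1) (u : Fin n → ℝ) :
    BddBelow (range fun w => perturbedPrimal X y γ ℓ s (u, w)) := by
  have hminorant : ∀ i, ∃ d, ∀ t, ℓ (y i) 0 + d * t ≤ ℓ (y i) t := fun i => by
    obtain ⟨g, hg⟩ := (hconv (y i)).exists_subgradient
      (continuousOn_univ.1 ((hconv (y i)).continuousOn isOpen_univ)) 0
    refine ⟨g 1, fun t => ?_⟩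
    have hlin : g t = g 1 * t := by
      rw [mul_comm, ← smul_eq_mul, ← g.map_smul, smul_eq_mul, mul_one]
    simpa [hlin] using hg t
  choose d hd using hminorant
  refine ⟨∑ i, (ℓ (y i) 0 + d i * u i) - γ / 2 * ∑ j, s j * (Xᵀ *ᵥ d) j ^ 2, ?_⟩
  rintro _ ⟨w, rfl⟩
  have hquad := (isLeast_sum_mul_add_sum_sq γ s hγ hs (Xᵀ *ᵥ d)).2 ⟨w, rfl⟩
  have hloss : ∑ i, (ℓ (y i) 0 + d i * ((X *ᵥ w) i + u i))
      ≤ ∑ i, ℓ (y i) ((X *ᵥ w) i + u i) := Finset.sum_le_sum fun i _ => hd i _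
  have hadj : ∑ i, d i * (X *ᵥ w) i = ∑ j, (w : Fin p → ℝ) j * (Xᵀ *ᵥ d) j := by
    simp_rw [mul_comm (d _)]
    exact X.sum_mulVec_mul w d
  simp only [mul_add, Finset.sum_add_distrib] at hloss
  simp only [perturbedPrimal, Finset.sum_add_distrib]
  linarith

theorem convexOn_primalValue (hγ : 0 < γ) (hconv : ∀ z, ConvexOn ℝ univ (ℓ z))
    (hs : ∀ j, s j = 0 ∨ s j = 1) : ConvexOn ℝ univ (primalValue X y γ ℓ s) :=
  (convexOn_perturbedPrimal X y γ ℓ s hγ.le hconv).ciInf_snd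
    (bddBelow_perturbedPrimal X y γ ℓ s hγ hconv hs)

theorem coe_primalValue_zero (hγ : 0 < γ) (hconv : ∀ z, ConvexOn ℝ univ (ℓ z))
    (hs : ∀ j, s j = 0 ∨ s j = 1) :
    ((primalValue X y γ ℓ s 0 : ℝ) : EReal) = ⨅ w : supportSubmodule s,
      ((∑ i, ℓ (y i) ((X *ᵥ w) i) + 1 / (2 * γ) * ∑ j, (w : Fin p → ℝ) j ^ 2 : ℝ) : EReal) := by
  rw [primalValue, Monotone.map_ciInf_of_continuousAt continuous_coe_real_ereal.continuousAt
    EReal.coe_strictMono.monotone (bddBelow_perturbedPrimal X y γ ℓ s hγ hconv hs 0)]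
  simp [perturbedPrimal]

theorem dualObjective_le_primal (hγ : 0 < γ) (hs : ∀ j, s j = 0 ∨ s j = 1)
    (α : Fin n → ℝ) (w : supportSubmodule s) :
    dualObjective X y γ ℓ s α ≤
      ((∑ i, ℓ (y i) ((X *ᵥ w) i) + 1 / (2 * γ) * ∑ j, (w : Fin p → ℝ) j ^ 2 : ℝ) : EReal) := by
  have hyoung : ((∑ i, ((X *ᵥ w) i * α i - ℓ (y i) ((X *ᵥ w) i)) : ℝ) : EReal)
      ≤ ∑ i, ⨆ t : ℝ, ((t * α i - ℓ (y i) t : ℝ) : EReal) := by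
    rw [EReal.coe_finsetSum]
    exact Finset.sum_le_sum fun i _ => le_iSup_of_le ((X *ᵥ w) i) le_rfl
  have hquad := (isLeast_sum_mul_add_sum_sq γ s hγ hs (Xᵀ *ᵥ α)).2 ⟨w, rfl⟩
  have hadj := X.sum_mulVec_mul w α
  calc dualObjective X y γ ℓ s α
      ≤ -((∑ i, ((X *ᵥ w) i * α i - ℓ (y i) ((X *ᵥ w) i)) : ℝ) : EReal)
        - ((γ / 2 * ∑ j, s j * (Xᵀ *ᵥ α) j ^ 2 : ℝ) : EReal) :=
      EReal.sub_le_sub (EReal.neg_le_neg_iff.2 hyoung) le_rfl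
    _ ≤ _ := by
      rw [← EReal.coe_neg, ← EReal.coe_sub, EReal.coe_le_coe_iff, Finset.sum_sub_distrib]
      linarith

theorem primalValue_zero_le_dualObjective (hγ : 0 < γ) (hconv : ∀ z, ConvexOn ℝ univ (ℓ z))
    (hs : ∀ j, s j = 0 ∨ s j = 1) (α : Fin n → ℝ)
    (hα : ∀ u, primalValue X y γ ℓ s 0 + ∑ i, u i * α i ≤ primalValue X y γ ℓ s u) :
    (primalValue X y γ ℓ s 0 : EReal) ≤ dualObjective X y γ ℓ s α := by
  set V := primalValue X y γ ℓ s
  set Q := γ / 2 * ∑ j, s j * (Xᵀ *ᵥ α) j ^ 2 with hQ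
  obtain ⟨w, hw⟩ := (isLeast_sum_mul_add_sum_sq γ s hγ hs (Xᵀ *ᵥ α)).1
  have hconj : ∀ t : Fin n → ℝ, ∑ i, (t i * α i - ℓ (y i) (t i)) ≤ -V 0 - Q := fun t => by
    have hsub := hα (t - X *ᵥ w)
    have hinf : V (t - X *ᵥ w) ≤ perturbedPrimal X y γ ℓ s (t - X *ᵥ w, w) :=
      ciInf_le (bddBelow_perturbedPrimal X y γ ℓ s hγ hconv hs _) w
    have hadj := X.sum_mulVec_mul w α
    simp only [perturbedPrimal, Pi.sub_apply, add_sub_cancel] at hinf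
    simp only [Pi.sub_apply, sub_mul, Finset.sum_sub_distrib] at hsub
    simp only [Finset.sum_sub_distrib]
    linarith
  have hsum : ∑ i, ⨆ t : ℝ, ((t * α i - ℓ (y i) t : ℝ) : EReal) ≤ ((-V 0 - Q : ℝ) : EReal) :=
    (EReal.sum_iSup_le_iSup_sum _).trans <| iSup_le fun t => by
      rw [← EReal.coe_finsetSum]
      exact EReal.coe_le_coe_iff.2 (hconj t)
  calc (V 0 : EReal) = -((-V 0 - Q : ℝ) : EReal) - (Q : EReal) := by
        rw [← EReal.coe_neg, ← EReal.coe_sub]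
        norm_num
    _ ≤ dualObjective X y γ ℓ s α := EReal.sub_le_sub (EReal.neg_le_neg_iff.2 hsum) le_rfl

end InnerProblem

/-- Strong duality for the inner ℓ₂-regularized problem restricted to the support
encoded by a binary vector `s`. -/
theorem inner_problem_strong_duality
    {n p : ℕ}
    (X : Matrix (Fin n) (Fin p) ℝ) (y : Fin n → ℝ)
    (γ : ℝ) (hγ : 0 < γ)
    (ℓ : ℝ → ℝ → ℝ) (hconv : ∀ z : ℝ, ConvexOn ℝ Set.univ (ℓ z))
    (lhat : ℝ → ℝ → EReal)
    (hlhat : ∀ z a : ℝ, lhat z a = ⨆ u : ℝ, ((u * a - ℓ z u : ℝ) : EReal))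
    (f : (Fin n → ℝ) → (Fin p → ℝ) → EReal)
    (hf : ∀ α s, f α s =
      -(∑ i, lhat (y i) (α i))
        - ((γ / 2 * ∑ j, s j * (∑ i, X i j * α i) ^ 2 : ℝ) : EReal))
    (s : Fin p → ℝ) (hs : ∀ j, s j = 0 ∨ s j = 1) :
    (⨅ w : {w : Fin p → ℝ // ∀ j, s j = 0 → w j = 0},
        ((∑ i, ℓ (y i) (∑ j, X i j * w.1 j)
            + 1 / (2 * γ) * ∑ j, (w.1 j) ^ 2 : ℝ) : EReal))
      = ⨆ α : Fin n → ℝ, f α s := by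
  have hdual : ∀ α, f α s = dualObjective X y γ ℓ s α := fun α => by
    simp only [hf, hlhat]
    rfl
  obtain ⟨α, hα⟩ := (convexOn_primalValue X y γ ℓ s hγ hconv hs).exists_sum_mul_le 0
  simp only [Pi.zero_apply, sub_zero] at hα
  simp only [hdual]
  refine le_antisymm ?_ <| iSup_le fun α => le_iInf fun w =>
    dualObjective_le_primal X y γ ℓ s hγ hs α w
  calc _ = ((primalValue X y γ ℓ s 0 : ℝ) : EReal) :=
        (coe_primalValue_zero X y γ ℓ s hγ hconv hs).symm
    _ ≤ dualObjective X y γ ℓ s α :=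
        primalValue_zero_le_dualObjective X y γ ℓ s hγ hconv hs α hα
    _ ≤ ⨆ α, dualObjective X y γ ℓ s α := le_iSup _ α
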